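/- arXiv:1407.6133 — 4 statements merged into one kernel-verified Lean document; each statement's English description precedes it below -/
import Mathlib

section
/- Let f be a convex, proper, lsc function on R^n with nonempty solution set X* of min_{x∈X} f over a closed convex set X ⊆ dom(f). Consider the iteration x^{(k+1)} = P_{X,D_k^{-1}}(x^{(k)} - α_k D_k u^{(k)}) with u^{(k)} ∈ ∂_{ε_k} f(x^{(k)}), ||u^{(k)}|| ≤ ρ, and symmetric positive definite matrices D_k with ||D_k|| ≤ L_k, ||D_k^{-1}|| ≤ L_k, 1 ≤ L_k ≤ L. Then for every x̃ ∈ X*, the iterates satisfy ||x^{(k+1)} - x̃||_{D_k^{-1}}^2 ≤ ||x^{(k)} - x̃||_{D_k^{-1}}^2 + 5 L_k α_k^2 ρ^2 + 2 L_k α_k ε_k. -/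
/-!
The projection onto `X` in the `D⁻¹`-norm satisfies the variational inequality
`⟪y - p, w - p⟫_{D⁻¹} ≤ 0` for `w ∈ X`, hence is nonexpansive towards points of `X`:
`‖x_{k+1} - x̃‖² ≤ ‖x_k - α D u - x̃‖²`. Since `D⁻¹ D = 1`, the right side expands to
`‖x_k - x̃‖² + 2α⟪u, x̃ - x_k⟫ + α²⟪u, D u⟫`. The `ε`-subgradient inequality at `x̃`, together
with `f x̃ ≤ f x_k`, bounds the middle term by `2αε`, and `‖D‖ ≤ L`, `‖u‖ ≤ ρ` bound the last one
by `L α² ρ²`.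
-/

open Matrix

theorem nonpos_of_forall_le_mul {a b : ℝ} (h : ∀ t ∈ Set.Ioc (0 : ℝ) 1, a ≤ t * b) : a ≤ 0 := by
  by_contra! ha
  have hab : a ≤ b := by simpa using h 1 ⟨one_pos, le_rfl⟩
  have hb : 0 < b := ha.trans_le hab
  have hhalf : a ≤ a / (2 * b) * b :=
    h _ ⟨by positivity, (div_le_one (by positivity)).2 (by linarith)⟩
  rw [div_mul_eq_mul_div, mul_div_mul_right _ _ hb.ne'] at hhalf
  linarith

theorem EReal.nonpos_of_add_coe_le {a : EReal} (ha : a ≠ ⊥) (ha' : a ≠ ⊤) {r : ℝ}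
    (h : a + r ≤ a) : r ≤ 0 := by
  lift a to ℝ using ⟨ha', ha⟩
  exact_mod_cast (add_le_iff_nonpos_right a).mp (by exact_mod_cast h)

namespace Matrix

variable {ι : Type*} [Fintype ι] {E : Matrix ι ι ℝ}

theorem IsHermitian.dotProduct_mulVec_comm (hE : E.IsHermitian) (a c : ι → ℝ) :
    a ⬝ᵥ E *ᵥ c = c ⬝ᵥ E *ᵥ a := by
  rw [dotProduct_mulVec, ← mulVec_transpose, ← conjTranspose_eq_transpose_of_trivial, hE.eq,
    dotProduct_comm]

theorem IsHermitian.sub_dotProduct_mulVec_sub (hE : E.IsHermitian) (a c : ι → ℝ) :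
    (a - c) ⬝ᵥ E *ᵥ (a - c) = a ⬝ᵥ E *ᵥ a - 2 * (a ⬝ᵥ E *ᵥ c) + c ⬝ᵥ E *ᵥ c := by
  rw [mulVec_sub, sub_dotProduct, dotProduct_sub, dotProduct_sub, hE.dotProduct_mulVec_comm c a]
  ring

section Projection

variable {X : Set (ι → ℝ)} {y p w : ι → ℝ}

theorem IsHermitian.dotProduct_mulVec_sub_nonpos_of_isMinOn (hE : E.IsHermitian)
    (hX : Convex ℝ X) (hp : p ∈ X) (hmin : IsMinOn (fun w ↦ (y - w) ⬝ᵥ E *ᵥ (y - w)) X p)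
    (hw : w ∈ X) : (y - p) ⬝ᵥ E *ᵥ (w - p) ≤ 0 := by
  suffices ∀ t ∈ Set.Ioc (0 : ℝ) 1,
      2 * ((y - p) ⬝ᵥ E *ᵥ (w - p)) ≤ t * ((w - p) ⬝ᵥ E *ᵥ (w - p)) by
    linarith [nonpos_of_forall_le_mul this]
  rintro t ⟨ht0, ht1⟩
  -- moving `p` a step `t` towards `w` cannot bring it closer to `y`
  have hmem : p + t • (w - p) ∈ X := by
    simpa [smul_sub, add_comm] using hX.add_smul_sub_mem hp hw ⟨ht0.le, ht1⟩
  have key := isMinOn_iff.mp hmin _ hmem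
  have hexp := hE.sub_dotProduct_mulVec_sub (y - p) (t • (w - p))
  simp only [sub_add_eq_sub_sub, mulVec_smul, dotProduct_smul, smul_dotProduct, smul_eq_mul]
    at key hexp
  rw [hexp] at key
  nlinarith

theorem PosSemidef.dotProduct_mulVec_sub_le_of_isMinOn (hE : E.PosSemidef)
    (hX : Convex ℝ X) (hp : p ∈ X) (hmin : IsMinOn (fun w ↦ (y - w) ⬝ᵥ E *ᵥ (y - w)) X p)
    (hw : w ∈ X) : (p - w) ⬝ᵥ E *ᵥ (p - w) ≤ (y - w) ⬝ᵥ E *ᵥ (y - w) := by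
  have hvi := hE.isHermitian.dotProduct_mulVec_sub_nonpos_of_isMinOn hX hp hmin hw
  have hyp : 0 ≤ (y - p) ⬝ᵥ E *ᵥ (y - p) := hE.dotProduct_mulVec_nonneg _
  have hsplit := hE.isHermitian.sub_dotProduct_mulVec_sub (y - p) (w - p)
  rw [sub_sub_sub_cancel_right] at hsplit
  rw [← neg_sub w p, mulVec_neg, neg_dotProduct, dotProduct_neg, neg_neg, hsplit]
  linarith

end Projection

theorem IsHermitian.sub_smul_mulVec_dotProduct_mulVec [DecidableEq ι] {D : Matrix ι ι ℝ}
    (hE : E.IsHermitian) (hED : E * D = 1) (x u w : ι → ℝ) (α : ℝ) :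
    (x - α • D *ᵥ u - w) ⬝ᵥ E *ᵥ (x - α • D *ᵥ u - w)
      = (x - w) ⬝ᵥ E *ᵥ (x - w) - 2 * α * ((x - w) ⬝ᵥ u) + α ^ 2 * (u ⬝ᵥ D *ᵥ u) := by
  have hinv : E *ᵥ D *ᵥ u = u := by rw [mulVec_mulVec, hED, one_mulVec]
  rw [sub_right_comm, hE.sub_dotProduct_mulVec_sub]
  simp only [mulVec_smul, hinv, dotProduct_smul, smul_dotProduct, smul_eq_mul]
  rw [dotProduct_comm (D *ᵥ u)]
  ring

end Matrix

theorem stmt8_general {n : ℕ} (f : (Fin n → ℝ) → EReal)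
    (hproper_bot : ∀ z, f z ≠ ⊥)
    (X : Set (Fin n → ℝ)) (hXconv : Convex ℝ X)
    (hXdom : ∀ z ∈ X, f z ≠ ⊤)
    (x u : ℕ → Fin n → ℝ) (ε α L : ℕ → ℝ) (ρ : ℝ)
    (D : ℕ → Matrix (Fin n) (Fin n) ℝ) (hD : ∀ k, (D k).PosDef)
    (hε : ∀ k, 0 ≤ ε k) (hα : ∀ k, 0 < α k)
    (hx0 : x 0 ∈ X)
    -- `u k` is an `ε k`-subgradient of `f` at `x k`
    (hu : ∀ k, ∀ z : Fin n → ℝ,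
      f (x k) + (((u k ⬝ᵥ (z - x k) - ε k : ℝ)) : EReal) ≤ f z)
    -- boundedness of the subgradients: `‖u k‖ ≤ ρ`
    (hρ : ∀ k, Real.sqrt (u k ⬝ᵥ u k) ≤ ρ)
    -- spectral bounds `‖D k‖ ≤ L k` and `‖(D k)⁻¹‖ ≤ L k`, with `1 ≤ L k ≤ Lbd`
    (hDub : ∀ k, ∀ v : Fin n → ℝ, v ⬝ᵥ (D k).mulVec v ≤ L k * (v ⬝ᵥ v))
    (hL1 : ∀ k, 1 ≤ L k)
    -- `x (k+1)` is the scaled projection of `x k - α k • D k u k` onto `X`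
    (hproj : ∀ k, x (k + 1) ∈ X ∧ ∀ w ∈ X,
      ((x k - α k • (D k).mulVec (u k)) - x (k + 1)) ⬝ᵥ
          (D k)⁻¹.mulVec ((x k - α k • (D k).mulVec (u k)) - x (k + 1))
        ≤ ((x k - α k • (D k).mulVec (u k)) - w) ⬝ᵥ
            (D k)⁻¹.mulVec ((x k - α k • (D k).mulVec (u k)) - w))
    -- `x̃` is a solution of `min_{x ∈ X} f`
    (xt : Fin n → ℝ) (hxt : xt ∈ X) (hxtmin : ∀ z ∈ X, f xt ≤ f z) :
    ∀ k, (x (k + 1) - xt) ⬝ᵥ (D k)⁻¹.mulVec (x (k + 1) - xt)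
      ≤ (x k - xt) ⬝ᵥ (D k)⁻¹.mulVec (x k - xt)
        + 5 * L k * (α k) ^ 2 * ρ ^ 2 + 2 * L k * α k * ε k := by
  have hxX : ∀ m, x m ∈ X
    | 0 => hx0
    | m + 1 => (hproj m).1
  intro k
  have hE : (D k)⁻¹.PosDef := (hD k).inv
  have hED : (D k)⁻¹ * D k = 1 := nonsing_inv_mul _ (hD k).det_pos.ne'.isUnit
  have hsub : u k ⬝ᵥ (xt - x k) ≤ ε k := by
    have := EReal.nonpos_of_add_coe_le (hproper_bot _) (hXdom _ (hxX k))
      ((hu k xt).trans (hxtmin _ (hxX k)))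
    linarith
  have hDu : u k ⬝ᵥ D k *ᵥ u k ≤ L k * ρ ^ 2 :=
    (hDub k (u k)).trans <|
      mul_le_mul_of_nonneg_left (Real.sqrt_le_iff.mp (hρ k)).2 (by linarith [hL1 k])
  have hα0 := (hα k).le
  calc _ ≤ (x k - α k • D k *ᵥ u k - xt) ⬝ᵥ (D k)⁻¹ *ᵥ (x k - α k • D k *ᵥ u k - xt) :=
        hE.posSemidef.dotProduct_mulVec_sub_le_of_isMinOn hXconv (hproj k).1
          (isMinOn_iff.mpr (hproj k).2) hxt
    _ = (x k - xt) ⬝ᵥ (D k)⁻¹ *ᵥ (x k - xt) + 2 * α k * (u k ⬝ᵥ (xt - x k))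
          + α k ^ 2 * (u k ⬝ᵥ D k *ᵥ u k) := by
        rw [hE.isHermitian.sub_smul_mulVec_dotProduct_mulVec hED, dotProduct_comm (x k - xt) (u k),
          ← neg_sub xt, dotProduct_neg]
        ring
    _ ≤ _ := by
        have hLρ : 0 ≤ L k * ρ ^ 2 := mul_nonneg (by linarith [hL1 k]) (sq_nonneg ρ)
        have hlin : 2 * α k * (u k ⬝ᵥ (xt - x k)) ≤ 2 * L k * α k * ε k := by
          nlinarith [mul_le_mul_of_nonneg_left hsub hα0, mul_nonneg hα0 (hε k), hL1 k]
        have hquad : α k ^ 2 * (u k ⬝ᵥ D k *ᵥ u k) ≤ 5 * L k * α k ^ 2 * ρ ^ 2 := by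
          nlinarith [mul_le_mul_of_nonneg_left hDu (sq_nonneg (α k)),
            mul_nonneg (sq_nonneg (α k)) hLρ]
        linarith

/-- Basic inequality for the scaled ε-subgradient projection method: for every
solution `x̃` of `min_{x∈X} f`,
`‖x^{k+1} - x̃‖²_{D_k⁻¹} ≤ ‖x^k - x̃‖²_{D_k⁻¹} + 5 L_k α_k² ρ² + 2 L_k α_k ε_k`. -/
theorem stmt8 {n : ℕ} (f : (Fin n → ℝ) → EReal)
    (hproper_bot : ∀ z, f z ≠ ⊥)
    (hconv : ∀ a b : Fin n → ℝ, ∀ t : ℝ, 0 ≤ t → t ≤ 1 →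
      f (t • a + (1 - t) • b) ≤ ((t : ℝ) : EReal) * f a + (((1 - t : ℝ)) : EReal) * f b)
    (hlsc : LowerSemicontinuous f)
    (X : Set (Fin n → ℝ)) (hXne : X.Nonempty) (hXcl : IsClosed X) (hXconv : Convex ℝ X)
    (hXdom : ∀ z ∈ X, f z ≠ ⊤)
    (x u : ℕ → Fin n → ℝ) (ε α L : ℕ → ℝ) (ρ : ℝ) (Lbd : ℝ)
    (D : ℕ → Matrix (Fin n) (Fin n) ℝ) (hD : ∀ k, (D k).PosDef)
    (hε : ∀ k, 0 ≤ ε k) (hα : ∀ k, 0 < α k)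
    (hx0 : x 0 ∈ X)
    -- `u k` is an `ε k`-subgradient of `f` at `x k`
    (hu : ∀ k, ∀ z : Fin n → ℝ,
      f (x k) + (((u k ⬝ᵥ (z - x k) - ε k : ℝ)) : EReal) ≤ f z)
    -- boundedness of the subgradients: `‖u k‖ ≤ ρ`
    (hρ : ∀ k, Real.sqrt (u k ⬝ᵥ u k) ≤ ρ)
    -- spectral bounds `‖D k‖ ≤ L k` and `‖(D k)⁻¹‖ ≤ L k`, with `1 ≤ L k ≤ Lbd`
    (hDub : ∀ k, ∀ v : Fin n → ℝ, v ⬝ᵥ (D k).mulVec v ≤ L k * (v ⬝ᵥ v))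
    (hDlb : ∀ k, ∀ v : Fin n → ℝ, v ⬝ᵥ v ≤ L k * (v ⬝ᵥ (D k).mulVec v))
    (hL1 : ∀ k, 1 ≤ L k) (hLbd : ∀ k, L k ≤ Lbd)
    -- `x (k+1)` is the scaled projection of `x k - α k • D k u k` onto `X`
    (hproj : ∀ k, x (k + 1) ∈ X ∧ ∀ w ∈ X,
      ((x k - α k • (D k).mulVec (u k)) - x (k + 1)) ⬝ᵥ
          (D k)⁻¹.mulVec ((x k - α k • (D k).mulVec (u k)) - x (k + 1))
        ≤ ((x k - α k • (D k).mulVec (u k)) - w) ⬝ᵥ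
            (D k)⁻¹.mulVec ((x k - α k • (D k).mulVec (u k)) - w))
    -- `x̃` is a solution of `min_{x ∈ X} f`
    (xt : Fin n → ℝ) (hxt : xt ∈ X) (hxtmin : ∀ z ∈ X, f xt ≤ f z) :
    ∀ k, (x (k + 1) - xt) ⬝ᵥ (D k)⁻¹.mulVec (x (k + 1) - xt)
      ≤ (x k - xt) ⬝ᵥ (D k)⁻¹.mulVec (x k - xt)
        + 5 * L k * (α k) ^ 2 * ρ ^ 2 + 2 * L k * α k * ε k :=
  stmt8_general f hproper_bot X hXconv hXdom x u ε α L ρ D hD hε hα hx0 hu hρ hDub hL1 hproj xt hxt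
    hxtmin
end

section
/- Under the hypotheses of the scaled ε-subgradient method (x^{(k+1)} = P_{X,D_k^{-1}}(x^{(k)} - α_k D_k u^{(k)}), u^{(k)} ∈ ∂_{ε_k} f(x^{(k)}), ||u^{(k)}|| ≤ ρ, ||D_k||, ||D_k^{-1}|| ≤ L_k ≤ L), if ε_k → 0, Σ α_k = ∞, Σ α_k^2 < ∞, Σ ε_k α_k < ∞, and L_k^2 = 1 + γ_k with Σ γ_k < ∞, then the sequence {x^{(k)}} converges to a point of the solution set X* of min_{x∈X} f, assumed nonempty. -/
/-!
For every minimizer `p`, the squared distance `aₖ = ‖xₖ - p‖²` in the metric of `Dₖ⁻¹`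
satisfies the quasi-Fejér inequality `aₖ₊₁ + αₖ (f xₖ - f p) ≤ (1 + δₖ) (aₖ + bₖ)` with
`δₖ = (γₖ + γₖ₊₁) / 2` (from `Lₖ Lₖ₊₁ ≤ (Lₖ² + Lₖ₊₁²) / 2`, the price of changing the metric) and
`bₖ = 2 εₖ αₖ + L ρ² αₖ²`, both summable. Hence `aₖ` converges and `∑ αₖ (f xₖ - f p) < ∞`;
as `∑ αₖ = ∞`, `f xₖ → min f` along a subsequence. The iterates are bounded, so a further
subsequence converges, and by lower semicontinuity its limit `x̄` is a minimizer. The distance to `x̄` converges and tends to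
`0` along that subsequence, so `xₖ → x̄`.
-/

open Matrix Filter Topology

section QuadraticForm

variable {ι : Type*} [Fintype ι]

lemma norm_le_sqrt_dotProduct_self (v : ι → ℝ) : ‖v‖ ≤ √(v ⬝ᵥ v) := by
  refine (pi_norm_le_iff_of_nonneg (Real.sqrt_nonneg _)).2 fun i => ?_
  rw [Real.norm_eq_abs, ← Real.sqrt_sq_eq_abs]
  refine Real.sqrt_le_sqrt ?_
  simpa [sq, dotProduct] using
    Finset.single_le_sum (fun j _ => mul_self_nonneg (v j)) (Finset.mem_univ i)

lemma dotProduct_self_nonneg (v : ι → ℝ) : 0 ≤ v ⬝ᵥ v := dotProduct_star_self_nonneg v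

namespace Matrix

lemma IsHermitian.dotProduct_mulVec_add_smul {M : Matrix ι ι ℝ} (hM : M.IsHermitian)
    (a b : ι → ℝ) (t : ℝ) :
    (a + t • b) ⬝ᵥ M *ᵥ (a + t • b)
      = a ⬝ᵥ M *ᵥ a + 2 * t * (a ⬝ᵥ M *ᵥ b) + t ^ 2 * (b ⬝ᵥ M *ᵥ b) := by
  have hba : b ⬝ᵥ M *ᵥ a = a ⬝ᵥ M *ᵥ b := by
    rw [dotProduct_mulVec, ← mulVec_transpose, show Mᵀ = M from hM, dotProduct_comm]
  simp only [mulVec_add, mulVec_smul, dotProduct_add, add_dotProduct, dotProduct_smul,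
    smul_dotProduct, smul_eq_mul, hba]
  ring

lemma PosSemidef.dotProduct_mulVec_sq_le {M : Matrix ι ι ℝ} (hM : M.PosSemidef) (a b : ι → ℝ) :
    (a ⬝ᵥ M *ᵥ b) ^ 2 ≤ (a ⬝ᵥ M *ᵥ a) * (b ⬝ᵥ M *ᵥ b) := by
  let := M.toSeminormedAddCommGroup hM
  let := M.toInnerProductSpace hM
  have := real_inner_mul_inner_self_le a b
  change (M *ᵥ b) ⬝ᵥ a * ((M *ᵥ b) ⬝ᵥ a) ≤ (M *ᵥ a) ⬝ᵥ a * ((M *ᵥ b) ⬝ᵥ b) at this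
  simpa [sq, dotProduct_comm] using this

variable [DecidableEq ι]

lemma PosDef.mulVec_inv_mulVec {M : Matrix ι ι ℝ} (hM : M.PosDef) (v : ι → ℝ) :
    M *ᵥ M⁻¹ *ᵥ v = v := by
  rw [mulVec_mulVec, mul_nonsing_inv _ ((isUnit_iff_isUnit_det M).1 hM.isUnit), one_mulVec]

lemma PosDef.inv_mulVec_mulVec {M : Matrix ι ι ℝ} (hM : M.PosDef) (v : ι → ℝ) :
    M⁻¹ *ᵥ M *ᵥ v = v := by
  rw [mulVec_mulVec, nonsing_inv_mul _ ((isUnit_iff_isUnit_det M).1 hM.isUnit), one_mulVec]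

lemma PosDef.dotProduct_self_le_mul_dotProduct_inv_mulVec {M : Matrix ι ι ℝ} (hM : M.PosDef) {L : ℝ}
    (h : ∀ v, v ⬝ᵥ M *ᵥ v ≤ L * (v ⬝ᵥ v)) (v : ι → ℝ) :
    v ⬝ᵥ v ≤ L * (v ⬝ᵥ M⁻¹ *ᵥ v) := by
  set w := M⁻¹ *ᵥ v
  have hv : M *ᵥ w = v := hM.mulVec_inv_mulVec v
  have hw : w ⬝ᵥ M *ᵥ w = v ⬝ᵥ w := by rw [hv, dotProduct_comm]
  have hcs := hM.posSemidef.dotProduct_mulVec_sq_le v w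
  rw [hv, dotProduct_comm w v] at hcs
  have hw0 : 0 ≤ v ⬝ᵥ w := hw ▸ hM.posSemidef.dotProduct_mulVec_nonneg w
  rcases (dotProduct_self_nonneg v).eq_or_lt with h0 | hpos
  · rw [dotProduct_self_eq_zero.1 h0.symm]; simp
  · refine le_of_mul_le_mul_right ?_ hpos
    nlinarith [mul_le_mul_of_nonneg_right (h v) hw0]

lemma PosDef.dotProduct_inv_mulVec_le_mul_dotProduct_self {M : Matrix ι ι ℝ} (hM : M.PosDef)
    {L : ℝ} (h : ∀ v, v ⬝ᵥ v ≤ L * (v ⬝ᵥ M *ᵥ v)) (v : ι → ℝ) :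
    v ⬝ᵥ M⁻¹ *ᵥ v ≤ L * (v ⬝ᵥ v) := by
  set w := M⁻¹ *ᵥ v
  have hv : M *ᵥ w = v := hM.mulVec_inv_mulVec v
  have hcs := (PosSemidef.one (n := ι) (R := ℝ)).dotProduct_mulVec_sq_le v w
  simp only [one_mulVec] at hcs
  have hw : w ⬝ᵥ M *ᵥ w = v ⬝ᵥ w := by rw [hv, dotProduct_comm]
  have hw0 : 0 ≤ v ⬝ᵥ w := hw ▸ hM.posSemidef.dotProduct_mulVec_nonneg w
  rcases hw0.eq_or_lt with h0 | hpos
  · have hw_zero : w = 0 := by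
      by_contra hne
      exact (hM.dotProduct_mulVec_pos hne).ne' (hw.trans h0.symm)
    rw [← hv, hw_zero]
    simp
  · refine le_of_mul_le_mul_right ?_ hpos
    have := h w
    rw [hw] at this
    nlinarith [mul_le_mul_of_nonneg_left this (dotProduct_self_nonneg v)]

end Matrix

end QuadraticForm

section Projection

variable {ι : Type*} [Fintype ι] {X : Set (ι → ℝ)}

lemma Matrix.PosSemidef.dotProduct_mulVec_sub_nonpos_of_isMinOn {Q : Matrix ι ι ℝ}
    (hQ : Q.PosSemidef) (hX : Convex ℝ X) {y z w : ι → ℝ} (hz : z ∈ X) (hw : w ∈ X)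
    (hmin : IsMinOn (fun v => (y - v) ⬝ᵥ Q *ᵥ (y - v)) X z) :
    (y - z) ⬝ᵥ Q *ᵥ (w - z) ≤ 0 := by
  have key : ∀ t : ℝ, 0 < t → t ≤ 1 →
      2 * ((y - z) ⬝ᵥ Q *ᵥ (w - z)) ≤ t * ((w - z) ⬝ᵥ Q *ᵥ (w - z)) := by
    intro t ht0 ht1
    have hmem : z + t • (w - z) ∈ X := by
      convert hX hz hw (by linarith : 0 ≤ 1 - t) ht0.le (by ring) using 1
      module
    have hle := isMinOn_iff.1 hmin _ hmem
    rw [show y - (z + t • (w - z)) = (y - z) + (-t) • (w - z) by module,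
      hQ.isHermitian.dotProduct_mulVec_add_smul] at hle
    nlinarith
  have hlim := (tendsto_one_div_add_atTop_nhds_zero_nat (𝕜 := ℝ)).mul_const
    ((w - z) ⬝ᵥ Q *ᵥ (w - z))
  rw [zero_mul] at hlim
  have := ge_of_tendsto' hlim fun m => key (1 / ((m : ℝ) + 1)) (by positivity)
    (by simpa using Nat.one_div_le_one_div (α := ℝ) (Nat.zero_le m))
  linarith

lemma Matrix.PosSemidef.dotProduct_mulVec_le_of_isMinOn {Q : Matrix ι ι ℝ}
    (hQ : Q.PosSemidef) (hX : Convex ℝ X) {y z p : ι → ℝ} (hz : z ∈ X) (hp : p ∈ X)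
    (hmin : IsMinOn (fun v => (y - v) ⬝ᵥ Q *ᵥ (y - v)) X z) :
    (z - p) ⬝ᵥ Q *ᵥ (z - p) ≤ (y - p) ⬝ᵥ Q *ᵥ (y - p) := by
  have hvi := hQ.dotProduct_mulVec_sub_nonpos_of_isMinOn hX hz hp hmin
  have hyz : 0 ≤ (y - z) ⬝ᵥ Q *ᵥ (y - z) := hQ.dotProduct_mulVec_nonneg _
  rw [show y - p = (y - z) + (-1 : ℝ) • (p - z) by module,
    hQ.isHermitian.dotProduct_mulVec_add_smul, show z - p = (-1 : ℝ) • (p - z) by module]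
  simp only [mulVec_smul, dotProduct_smul, smul_dotProduct, smul_eq_mul] at hyz ⊢
  nlinarith

end Projection

section QuasiFejer

open Finset

lemma le_exp_sum_mul_of_le_mul_add {a b δ : ℕ → ℝ} (ha : ∀ k, 0 ≤ a k) (hb : ∀ k, 0 ≤ b k)
    (hδ : ∀ k, 0 ≤ δ k) (h : ∀ k, a (k + 1) ≤ (1 + δ k) * (a k + b k)) (k : ℕ) :
    a k ≤ Real.exp (∑ j ∈ range k, δ j) * (a 0 + ∑ j ∈ range k, b j) := by
  induction k with
  | zero => simp
  | succ k ih =>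
    have hexp : 1 ≤ Real.exp (∑ j ∈ range k, δ j) := Real.one_le_exp (sum_nonneg fun j _ => hδ j)
    calc a (k + 1) ≤ (1 + δ k) * (a k + b k) := h k
      _ ≤ Real.exp (δ k) * (Real.exp (∑ j ∈ range k, δ j) * (a 0 + ∑ j ∈ range k, b j) + b k) := by
        refine mul_le_mul (by linarith [Real.add_one_le_exp (δ k)]) (by linarith)
          (add_nonneg (ha k) (hb k)) (Real.exp_pos _).le
      _ ≤ Real.exp (δ k) * (Real.exp (∑ j ∈ range k, δ j) * (a 0 + ∑ j ∈ range k, b j)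
            + Real.exp (∑ j ∈ range k, δ j) * b k) := by
        gcongr
        exact le_mul_of_one_le_left (hb k) hexp
      _ = Real.exp (∑ j ∈ range (k + 1), δ j) * (a 0 + ∑ j ∈ range (k + 1), b j) := by
        rw [sum_range_succ, sum_range_succ, Real.exp_add]
        ring

lemma tendsto_and_summable_of_add_le_add {a c g : ℕ → ℝ} (ha : ∀ k, 0 ≤ a k) (hc : ∀ k, 0 ≤ c k)
    (hg : ∀ k, 0 ≤ g k) (hgs : Summable g) (h : ∀ k, a (k + 1) + c k ≤ a k + g k) :
    (∃ l, Tendsto a atTop (𝓝 l)) ∧ Summable c := by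
  set A : ℕ → ℝ := fun k => a k + ∑ j ∈ range k, c j - ∑ j ∈ range k, g j
  have hA : Antitone A := antitone_nat_of_succ_le fun k => by
    simp only [A, sum_range_succ]; linarith [h k]
  have hgle : ∀ k, ∑ j ∈ range k, g j ≤ ∑' j, g j := fun k => hgs.sum_le_tsum _ fun j _ => hg j
  have hAbdd : ∀ k, -∑' j, g j ≤ A k := fun k => by
    have := sum_nonneg fun j (_ : j ∈ range k) => hc j
    simp only [A]; linarith [ha k, hgle k]
  have hcs : Summable c := summable_of_sum_range_le (c := a 0 + ∑' j, g j) hc fun k => by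
    have := hA (Nat.zero_le k)
    simp only [A, range_zero, sum_empty] at this
    linarith [ha k, hgle k]
  obtain ⟨l, hl⟩ : ∃ l, Tendsto A atTop (𝓝 l) :=
    ⟨_, tendsto_atTop_ciInf hA ⟨_, Set.forall_mem_range.2 hAbdd⟩⟩
  refine ⟨⟨l - ∑' j, c j + ∑' j, g j, ?_⟩, hcs⟩
  refine ((hl.sub hcs.hasSum.tendsto_sum_nat).add hgs.hasSum.tendsto_sum_nat).congr fun k => ?_
  simp only [A]; ring

lemma tendsto_and_summable_of_add_le_mul_add {a b c δ : ℕ → ℝ} (ha : ∀ k, 0 ≤ a k)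
    (hb : ∀ k, 0 ≤ b k) (hc : ∀ k, 0 ≤ c k) (hδ : ∀ k, 0 ≤ δ k) (hbs : Summable b)
    (hδs : Summable δ) (h : ∀ k, a (k + 1) + c k ≤ (1 + δ k) * (a k + b k)) :
    (∃ l, Tendsto a atTop (𝓝 l)) ∧ Summable c := by
  set M := Real.exp (∑' j, δ j) * (a 0 + ∑' j, b j) + ∑' j, b j
  have hM : ∀ k, a k + b k ≤ M := fun k => by
    have hak := le_exp_sum_mul_of_le_mul_add ha hb hδ (fun k => by linarith [h k, hc k]) k
    have hsb := hbs.sum_le_tsum (range k) fun j _ => hb j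
    have hsδ := hδs.sum_le_tsum (range k) fun j _ => hδ j
    have hbk := hbs.le_tsum k fun j _ => hb j
    calc a k + b k ≤ Real.exp (∑ j ∈ range k, δ j) * (a 0 + ∑ j ∈ range k, b j) + b k := by
          linarith
      _ ≤ M := add_le_add (mul_le_mul (Real.exp_le_exp.2 hsδ) (by linarith)
          (add_nonneg (ha 0) (sum_nonneg fun j _ => hb j)) (Real.exp_pos _).le) hbk
  refine tendsto_and_summable_of_add_le_add ha hc (g := fun k => δ k * M + b k)
    (fun k => add_nonneg (mul_nonneg (hδ k) ((add_nonneg (ha k) (hb k)).trans (hM k))) (hb k))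
    ((hδs.mul_right M).add hbs) fun k => ?_
  nlinarith [h k, mul_le_mul_of_nonneg_left (hM k) (hδ k)]

lemma exists_strictMono_tendsto_zero_of_summable_mul {α s : ℕ → ℝ} (hα : ∀ k, 0 ≤ α k)
    (hs : ∀ k, 0 ≤ s k) (hdiv : Tendsto (fun N => ∑ k ∈ range N, α k) atTop atTop)
    (hsum : Summable fun k => α k * s k) :
    ∃ φ : ℕ → ℕ, StrictMono φ ∧ Tendsto (s ∘ φ) atTop (𝓝 0) := by
  have hfreq : ∀ m : ℕ, ∃ᶠ k in atTop, s k < 1 / (m + 1) := by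
    intro m
    by_contra hev
    rw [not_frequently] at hev
    refine (not_summable_iff_tendsto_nat_atTop_of_nonneg hα).2 hdiv <|
      .of_norm_bounded_eventually_nat (hsum.mul_left ((m : ℝ) + 1)) (hev.mono fun k hk => ?_)
    rw [not_lt, div_le_iff₀ (by positivity)] at hk
    rw [Real.norm_of_nonneg (hα k)]
    nlinarith [hα k]
  obtain ⟨φ, hφ, hsφ⟩ := extraction_forall_of_frequently hfreq
  exact ⟨φ, hφ, squeeze_zero (fun j => hs _) (fun j => (hsφ j).le)
    tendsto_one_div_add_atTop_nhds_zero_nat⟩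

end QuasiFejer

section ScaledSubgradient

variable {ι : Type*} [Fintype ι] [DecidableEq ι] {X : Set (ι → ℝ)}

lemma Matrix.PosDef.projected_step_le {D : Matrix ι ι ℝ} (hD : D.PosDef) (hX : Convex ℝ X)
    {x u z p : ι → ℝ} {α : ℝ} (hz : z ∈ X) (hp : p ∈ X)
    (hmin : IsMinOn (fun w => (x - α • D *ᵥ u - w) ⬝ᵥ D⁻¹ *ᵥ (x - α • D *ᵥ u - w)) X z) :
    (z - p) ⬝ᵥ D⁻¹ *ᵥ (z - p)
      ≤ (x - p) ⬝ᵥ D⁻¹ *ᵥ (x - p) - 2 * α * (u ⬝ᵥ (x - p)) + α ^ 2 * (u ⬝ᵥ D *ᵥ u) := by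
  refine (hD.inv.posSemidef.dotProduct_mulVec_le_of_isMinOn hX hz hp hmin).trans_eq ?_
  rw [show x - α • D *ᵥ u - p = (x - p) + (-α) • (D *ᵥ u) by module,
    hD.inv.isHermitian.dotProduct_mulVec_add_smul, hD.inv_mulVec_mulVec,
    dotProduct_comm (D *ᵥ u) u, dotProduct_comm (x - p) u]
  ring

lemma Matrix.PosDef.projected_step_le_mul {D D' : Matrix ι ι ℝ} (hD : D.PosDef) (hD' : D'.PosDef)
    (hX : Convex ℝ X) {L L' c : ℝ} (hL : 0 ≤ L) (hL' : 0 ≤ L') (hc : L * L' ≤ c)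
    (hDub : ∀ v, v ⬝ᵥ D *ᵥ v ≤ L * (v ⬝ᵥ v)) (hD'lb : ∀ v, v ⬝ᵥ v ≤ L' * (v ⬝ᵥ D' *ᵥ v))
    {x u z p : ι → ℝ} {α : ℝ} (hz : z ∈ X) (hp : p ∈ X)
    (hmin : IsMinOn (fun w => (x - α • D *ᵥ u - w) ⬝ᵥ D⁻¹ *ᵥ (x - α • D *ᵥ u - w)) X z) :
    (z - p) ⬝ᵥ D'⁻¹ *ᵥ (z - p)
      ≤ c * ((x - p) ⬝ᵥ D⁻¹ *ᵥ (x - p) - 2 * α * (u ⬝ᵥ (x - p)) + α ^ 2 * (u ⬝ᵥ D *ᵥ u)) := by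
  have hq : 0 ≤ (z - p) ⬝ᵥ D⁻¹ *ᵥ (z - p) := hD.inv.posSemidef.dotProduct_mulVec_nonneg _
  calc (z - p) ⬝ᵥ D'⁻¹ *ᵥ (z - p) ≤ L' * ((z - p) ⬝ᵥ (z - p)) :=
        hD'.dotProduct_inv_mulVec_le_mul_dotProduct_self hD'lb _
    _ ≤ L' * (L * ((z - p) ⬝ᵥ D⁻¹ *ᵥ (z - p))) :=
        mul_le_mul_of_nonneg_left (hD.dotProduct_self_le_mul_dotProduct_inv_mulVec hDub _) hL'
    _ ≤ c * ((z - p) ⬝ᵥ D⁻¹ *ᵥ (z - p)) := by nlinarith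
    _ ≤ _ := mul_le_mul_of_nonneg_left (hD.projected_step_le hX hz hp hmin) (by nlinarith)

theorem scaledSubgradient_quasiFejer (hX : Convex ℝ X) {x u : ℕ → ι → ℝ} {ε α L γ s : ℕ → ℝ}
    {ρ Lbd : ℝ} {D : ℕ → Matrix ι ι ℝ} (hD : ∀ k, (D k).PosDef) (hε : ∀ k, 0 ≤ ε k)
    (hα : ∀ k, 0 ≤ α k) (hρ : ∀ k, u k ⬝ᵥ u k ≤ ρ ^ 2)
    (hDub : ∀ k v, v ⬝ᵥ D k *ᵥ v ≤ L k * (v ⬝ᵥ v))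
    (hDlb : ∀ k v, v ⬝ᵥ v ≤ L k * (v ⬝ᵥ D k *ᵥ v)) (hL1 : ∀ k, 1 ≤ L k) (hLbd : ∀ k, L k ≤ Lbd)
    (hproj : ∀ k, x (k + 1) ∈ X ∧ IsMinOn (fun w => (x k - α k • D k *ᵥ u k - w) ⬝ᵥ
      (D k)⁻¹ *ᵥ (x k - α k • D k *ᵥ u k - w)) X (x (k + 1)))
    (hαsq : Summable fun k => α k ^ 2) (hεα : Summable fun k => ε k * α k)
    (hLγ : ∀ k, L k ^ 2 = 1 + γ k) (hγ : ∀ k, 0 ≤ γ k) (hγsum : Summable γ)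
    {p : ι → ℝ} (hp : p ∈ X) (hs : ∀ k, 0 ≤ s k) (hsub : ∀ k, s k ≤ u k ⬝ᵥ (x k - p) + ε k) :
    (∃ l, Tendsto (fun k => (x k - p) ⬝ᵥ (D k)⁻¹ *ᵥ (x k - p)) atTop (𝓝 l)) ∧
      Summable fun k => α k * s k := by
  set a := fun k => (x k - p) ⬝ᵥ (D k)⁻¹ *ᵥ (x k - p)
  set b := fun k => 2 * (ε k * α k) + Lbd * ρ ^ 2 * α k ^ 2
  set δ := fun k => (γ k + γ (k + 1)) / 2
  have hδ : ∀ k, 0 ≤ δ k := fun k => by simp only [δ]; linarith [hγ k, hγ (k + 1)]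
  have hαs : ∀ k, 0 ≤ α k * s k := fun k => mul_nonneg (hα k) (hs k)
  have hrec : ∀ k, a (k + 1) + α k * s k ≤ (1 + δ k) * (a k + b k) := by
    intro k
    have hLL : L k * L (k + 1) ≤ 1 + δ k := by
      simp only [δ]; nlinarith [sq_nonneg (L k - L (k + 1)), hLγ k, hLγ (k + 1)]
    have hstep := (hD k).projected_step_le_mul (hD (k + 1)) hX (by linarith [hL1 k])
      (by linarith [hL1 (k + 1)]) hLL (hDub k) (hDlb (k + 1)) (hproj k).1 hp (hproj k).2
    have huDu : u k ⬝ᵥ D k *ᵥ u k ≤ Lbd * ρ ^ 2 := (hDub k (u k)).trans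
      (mul_le_mul (hLbd k) (hρ k) (dotProduct_self_nonneg _) (by linarith [hL1 k, hLbd k]))
    have hbracket : a k - 2 * α k * (u k ⬝ᵥ (x k - p)) + α k ^ 2 * (u k ⬝ᵥ D k *ᵥ u k)
        ≤ a k + b k - 2 * (α k * s k) := by
      nlinarith [mul_le_mul_of_nonneg_left huDu (sq_nonneg (α k)),
        mul_le_mul_of_nonneg_left (hsub k) (hα k)]
    have := hstep.trans (mul_le_mul_of_nonneg_left hbracket (by linarith [hδ k]))
    nlinarith [mul_nonneg (hδ k) (hαs k), hαs k]
  have hb : ∀ k, 0 ≤ b k := fun k => by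
    have := hε k; have := hα k; have : 0 ≤ Lbd := by linarith [hL1 0, hLbd 0]
    positivity
  exact tendsto_and_summable_of_add_le_mul_add
    (fun k => (hD k).inv.posSemidef.dotProduct_mulVec_nonneg _) hb hαs hδ
    ((hεα.mul_left 2).add (hαsq.mul_left _))
    ((hγsum.add ((summable_nat_add_iff 1).2 hγsum)).div_const 2) hrec

end ScaledSubgradient

section Limits

variable {ι : Type*} [Fintype ι] {Q : ℕ → Matrix ι ι ℝ} {C : ℝ} {x : ℕ → ι → ℝ} {p : ι → ℝ}

lemma isBounded_range_of_tendsto_dotProduct_mulVec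
    (hQ : ∀ k v, v ⬝ᵥ v ≤ C * (v ⬝ᵥ Q k *ᵥ v)) {l : ℝ}
    (hl : Tendsto (fun k => (x k - p) ⬝ᵥ Q k *ᵥ (x k - p)) atTop (𝓝 l)) :
    Bornology.IsBounded (Set.range x) := by
  obtain ⟨B, hB⟩ := (hl.const_mul C).bddAbove_range
  refine (Metric.isBounded_closedBall (x := p) (r := √B)).subset
    (Set.range_subset_iff.2 fun k => ?_)
  rw [Metric.mem_closedBall, dist_eq_norm]
  exact (norm_le_sqrt_dotProduct_self _).trans <| Real.sqrt_le_sqrt <|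
    (hQ k _).trans (hB (Set.mem_range_self k))

lemma tendsto_of_tendsto_dotProduct_mulVec_of_subseq (hQ : ∀ k, (Q k).PosSemidef)
    (hQlb : ∀ k v, v ⬝ᵥ v ≤ C * (v ⬝ᵥ Q k *ᵥ v)) (hQub : ∀ k v, v ⬝ᵥ Q k *ᵥ v ≤ C * (v ⬝ᵥ v))
    {l : ℝ} (hl : Tendsto (fun k => (x k - p) ⬝ᵥ Q k *ᵥ (x k - p)) atTop (𝓝 l))
    {φ : ℕ → ℕ} (hφ : StrictMono φ) (hxφ : Tendsto (x ∘ φ) atTop (𝓝 p)) :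
    Tendsto x atTop (𝓝 p) := by
  have hsq : Tendsto (fun j => (x (φ j) - p) ⬝ᵥ (x (φ j) - p)) atTop (𝓝 0) := by
    have hcont : Continuous fun v : ι → ℝ => (v - p) ⬝ᵥ (v - p) :=
      (continuous_id.sub continuous_const).dotProduct (continuous_id.sub continuous_const)
    have := (hcont.tendsto p).comp hxφ
    rwa [sub_self, zero_dotProduct] at this
  have hl0 : l = 0 := by
    refine tendsto_nhds_unique (hl.comp hφ.tendsto_atTop) (squeeze_zero
      (fun j => (hQ _).dotProduct_mulVec_nonneg _) (fun j => hQub _ _) ?_)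
    simpa using hsq.const_mul C
  rw [tendsto_iff_norm_sub_tendsto_zero]
  refine squeeze_zero (fun _ => norm_nonneg _)
    (fun k => (norm_le_sqrt_dotProduct_self _).trans (Real.sqrt_le_sqrt (hQlb k _))) ?_
  simpa [hl0] using (hl.const_mul C).sqrt

lemma LowerSemicontinuous.le_of_tendsto_coe {α β : Type*} [TopologicalSpace α] {f : α → EReal}
    (hf : LowerSemicontinuous f) {l : Filter β} [l.NeBot] {y : β → α} {a : α}
    (hy : Tendsto y l (𝓝 a)) {g : β → ℝ} (hfg : ∀ j, f (y j) = g j) {c : ℝ}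
    (hg : Tendsto g l (𝓝 c)) : f a ≤ c :=
  (hf.le_liminf a).trans <| hy.liminf_le_liminf_comp.trans_eq <|
    ((EReal.tendsto_coe.2 hg).congr fun j => (hfg j).symm).liminf_eq

end Limits

theorem stmt9_general {n : ℕ} (f : (Fin n → ℝ) → EReal)
    (hproper_bot : ∀ z, f z ≠ ⊥)
    (hlsc : LowerSemicontinuous f)
    (X : Set (Fin n → ℝ)) (hXcl : IsClosed X) (hXconv : Convex ℝ X)
    (hXdom : ∀ z ∈ X, f z ≠ ⊤)
    (x u : ℕ → Fin n → ℝ) (ε α L γ : ℕ → ℝ) (ρ : ℝ) (Lbd : ℝ)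
    (D : ℕ → Matrix (Fin n) (Fin n) ℝ) (hD : ∀ k, (D k).PosDef)
    (hε : ∀ k, 0 ≤ ε k) (hα : ∀ k, 0 < α k)
    (hx0 : x 0 ∈ X)
    -- `u k` is an `ε k`-subgradient of `f` at `x k`
    (hu : ∀ k, ∀ z : Fin n → ℝ,
      f (x k) + (((u k ⬝ᵥ (z - x k) - ε k : ℝ)) : EReal) ≤ f z)
    -- boundedness of the subgradients: `‖u k‖ ≤ ρ`
    (hρ : ∀ k, Real.sqrt (u k ⬝ᵥ u k) ≤ ρ)
    -- spectral bounds `‖D k‖ ≤ L k` and `‖(D k)⁻¹‖ ≤ L k`, with `1 ≤ L k ≤ Lbd`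
    (hDub : ∀ k, ∀ v : Fin n → ℝ, v ⬝ᵥ (D k).mulVec v ≤ L k * (v ⬝ᵥ v))
    (hDlb : ∀ k, ∀ v : Fin n → ℝ, v ⬝ᵥ v ≤ L k * (v ⬝ᵥ (D k).mulVec v))
    (hL1 : ∀ k, 1 ≤ L k) (hLbd : ∀ k, L k ≤ Lbd)
    -- `x (k+1)` is the scaled projection of `x k - α k • D k u k` onto `X`
    (hproj : ∀ k, x (k + 1) ∈ X ∧ ∀ w ∈ X,
      ((x k - α k • (D k).mulVec (u k)) - x (k + 1)) ⬝ᵥ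
          (D k)⁻¹.mulVec ((x k - α k • (D k).mulVec (u k)) - x (k + 1))
        ≤ ((x k - α k • (D k).mulVec (u k)) - w) ⬝ᵥ
            (D k)⁻¹.mulVec ((x k - α k • (D k).mulVec (u k)) - w))
    -- conditions on the parameter sequences
    (hαdiv : Filter.Tendsto (fun N => ∑ k ∈ Finset.range N, α k) Filter.atTop Filter.atTop)
    (hαsq : Summable (fun k => (α k) ^ 2))
    (hεα : Summable (fun k => ε k * α k))
    (hLγ : ∀ k, (L k) ^ 2 = 1 + γ k) (hγ : ∀ k, 0 ≤ γ k) (hγsum : Summable γ)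
    -- the solution set is nonempty
    (hXs : ∃ xs ∈ X, ∀ z ∈ X, f xs ≤ f z) :
    ∃ xstar : Fin n → ℝ, xstar ∈ X ∧ (∀ z ∈ X, f xstar ≤ f z) ∧
      Filter.Tendsto x Filter.atTop (nhds xstar) := by
  obtain ⟨xs, hxsX, hxsmin⟩ := hXs
  have hxX : ∀ k, x k ∈ X := fun k => Nat.casesOn k hx0 fun k => (hproj k).1
  have hfX : ∀ z ∈ X, f z = ((f z).toReal : EReal) := fun z hz =>
    (EReal.coe_toReal (hXdom z hz) (hproper_bot z)).symm
  have hsub : ∀ p ∈ X, ∀ k, (f (x k)).toReal - (f p).toReal ≤ u k ⬝ᵥ (x k - p) + ε k := by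
    intro p hp k
    have := hu k p
    rw [hfX _ (hxX k), hfX p hp, ← EReal.coe_add, EReal.coe_le_coe_iff] at this
    rw [dotProduct_sub] at this ⊢
    linarith
  have hgap : ∀ p ∈ X, (∀ z ∈ X, f p ≤ f z) → ∀ k, 0 ≤ (f (x k)).toReal - (f p).toReal :=
    fun p hp hpmin k => sub_nonneg.2 <| EReal.toReal_le_toReal (hpmin _ (hxX k)) (hproper_bot p)
      (hXdom _ (hxX k))
  have hQlb : ∀ k v, v ⬝ᵥ v ≤ Lbd * (v ⬝ᵥ (D k)⁻¹ *ᵥ v) := fun k v =>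
    ((hD k).dotProduct_self_le_mul_dotProduct_inv_mulVec (hDub k) v).trans
      (mul_le_mul_of_nonneg_right (hLbd k) ((hD k).inv.posSemidef.dotProduct_mulVec_nonneg v))
  have hQub : ∀ k v, v ⬝ᵥ (D k)⁻¹ *ᵥ v ≤ Lbd * (v ⬝ᵥ v) := fun k v =>
    ((hD k).dotProduct_inv_mulVec_le_mul_dotProduct_self (hDlb k) v).trans
      (mul_le_mul_of_nonneg_right (hLbd k) (dotProduct_self_nonneg v))
  have hfejer := fun p hp hpmin => scaledSubgradient_quasiFejer hXconv hD hε (fun k => (hα k).le)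
    (fun k => (Real.sqrt_le_iff.1 (hρ k)).2) hDub hDlb hL1 hLbd hproj hαsq hεα hLγ hγ hγsum hp
    (hgap p hp hpmin) (hsub p hp)
  obtain ⟨⟨l, hl⟩, hsum⟩ := hfejer xs hxsX hxsmin
  obtain ⟨φ, hφ, hgapφ⟩ := exists_strictMono_tendsto_zero_of_summable_mul (fun k => (hα k).le)
    (hgap xs hxsX hxsmin) hαdiv hsum
  obtain ⟨xbar, -, ψ, hψ, hxbar⟩ := tendsto_subseq_of_bounded
    (isBounded_range_of_tendsto_dotProduct_mulVec hQlb hl) fun j => Set.mem_range_self (φ j)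
  have hxbarX : xbar ∈ X := hXcl.mem_of_tendsto hxbar (.of_forall fun j => hxX _)
  have hxbarmin : ∀ z ∈ X, f xbar ≤ f z := fun z hz => by
    refine ((hlsc.le_of_tendsto_coe hxbar (fun j => hfX _ (hxX _)) ?_).trans_eq
      (hfX xs hxsX).symm).trans (hxsmin z hz)
    simpa using (hgapφ.comp hψ.tendsto_atTop).add_const (f xs).toReal
  obtain ⟨⟨l', hl'⟩, -⟩ := hfejer xbar hxbarX hxbarmin
  exact ⟨xbar, hxbarX, hxbarmin, tendsto_of_tendsto_dotProduct_mulVec_of_subseq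
    (fun k => (hD k).inv.posSemidef) hQlb hQub hl' (hφ.comp hψ) hxbar⟩

/-- Convergence of the scaled ε-subgradient projection method with diminishing,
divergent series, square summable stepsizes: the iterates converge to a
solution of `min_{x∈X} f`. -/
theorem stmt9 {n : ℕ} (f : (Fin n → ℝ) → EReal)
    (hproper_bot : ∀ z, f z ≠ ⊥)
    (hconv : ∀ a b : Fin n → ℝ, ∀ t : ℝ, 0 ≤ t → t ≤ 1 →
      f (t • a + (1 - t) • b) ≤ ((t : ℝ) : EReal) * f a + (((1 - t : ℝ)) : EReal) * f b)
    (hlsc : LowerSemicontinuous f)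
    (X : Set (Fin n → ℝ)) (hXne : X.Nonempty) (hXcl : IsClosed X) (hXconv : Convex ℝ X)
    (hXdom : ∀ z ∈ X, f z ≠ ⊤)
    (x u : ℕ → Fin n → ℝ) (ε α L γ : ℕ → ℝ) (ρ : ℝ) (Lbd : ℝ)
    (D : ℕ → Matrix (Fin n) (Fin n) ℝ) (hD : ∀ k, (D k).PosDef)
    (hε : ∀ k, 0 ≤ ε k) (hα : ∀ k, 0 < α k)
    (hx0 : x 0 ∈ X)
    -- `u k` is an `ε k`-subgradient of `f` at `x k`
    (hu : ∀ k, ∀ z : Fin n → ℝ,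
      f (x k) + (((u k ⬝ᵥ (z - x k) - ε k : ℝ)) : EReal) ≤ f z)
    -- boundedness of the subgradients: `‖u k‖ ≤ ρ`
    (hρ : ∀ k, Real.sqrt (u k ⬝ᵥ u k) ≤ ρ)
    -- spectral bounds `‖D k‖ ≤ L k` and `‖(D k)⁻¹‖ ≤ L k`, with `1 ≤ L k ≤ Lbd`
    (hDub : ∀ k, ∀ v : Fin n → ℝ, v ⬝ᵥ (D k).mulVec v ≤ L k * (v ⬝ᵥ v))
    (hDlb : ∀ k, ∀ v : Fin n → ℝ, v ⬝ᵥ v ≤ L k * (v ⬝ᵥ (D k).mulVec v))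
    (hL1 : ∀ k, 1 ≤ L k) (hLbd : ∀ k, L k ≤ Lbd)
    -- `x (k+1)` is the scaled projection of `x k - α k • D k u k` onto `X`
    (hproj : ∀ k, x (k + 1) ∈ X ∧ ∀ w ∈ X,
      ((x k - α k • (D k).mulVec (u k)) - x (k + 1)) ⬝ᵥ
          (D k)⁻¹.mulVec ((x k - α k • (D k).mulVec (u k)) - x (k + 1))
        ≤ ((x k - α k • (D k).mulVec (u k)) - w) ⬝ᵥ
            (D k)⁻¹.mulVec ((x k - α k • (D k).mulVec (u k)) - w))
    -- conditions on the parameter sequences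
    (hεlim : Filter.Tendsto ε Filter.atTop (nhds 0))
    (hαdiv : Filter.Tendsto (fun N => ∑ k ∈ Finset.range N, α k) Filter.atTop Filter.atTop)
    (hαsq : Summable (fun k => (α k) ^ 2))
    (hεα : Summable (fun k => ε k * α k))
    (hLγ : ∀ k, (L k) ^ 2 = 1 + γ k) (hγ : ∀ k, 0 ≤ γ k) (hγsum : Summable γ)
    -- the solution set is nonempty
    (hXs : ∃ xs ∈ X, ∀ z ∈ X, f xs ≤ f z) :
    ∃ xstar : Fin n → ℝ, xstar ∈ X ∧ (∀ z ∈ X, f xstar ≤ f z) ∧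
      Filter.Tendsto x Filter.atTop (nhds xstar) :=
  stmt9_general f hproper_bot hlsc X hXcl hXconv hXdom x u ε α L γ ρ Lbd D hD hε hα hx0 hu hρ hDub
    hDlb hL1 hLbd hproj hαdiv hαsq hεα hLγ hγ hγsum hXs
end

section
/- Under the hypotheses of Theorem on the scaled ε-subgradient method with square summable stepsizes, the iterates satisfy ||x^{(k+1)} - x̃||_{D_{k+1}^{-1}}^2 ≤ ζ_k ||x^{(k)} - x̃||_{D_k^{-1}}^2 + ξ ζ_k α_k^2 + 2 L ζ_k α_k ε_k for every x̃ ∈ X*, where ζ_k = sqrt((1+γ_k)(1+γ_{k+1})) and ξ = 5 L ρ^2; moreover ζ_k = 1 + η_k with Σ η_k < ∞, so the sequence is quasi-Fejér monotone with respect to X* relative to the metrics D_k^{-1}. -/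
/-!
The scaled projection onto the convex set `X` is nonexpansive, in the metric `D_k⁻¹`, towards every
point of `X` (variational inequality for the projection). Expanding the square of the step and
bounding the cross term by the `ε_k`-subgradient inequality at the minimiser `x̃` gives
`‖x^{k+1} - x̃‖²_{D_k⁻¹} ≤ ‖x^k - x̃‖²_{D_k⁻¹} + 2 α_k ε_k + α_k² ‖u^k‖²_{D_k}`.
Passing from `D_k⁻¹` to `D_{k+1}⁻¹` through the Euclidean norm costs the factor
`L_k L_{k+1} = ζ_k`, and by AM-GM `0 ≤ ζ_k - 1 ≤ (γ_k + γ_{k+1}) / 2`, which is summable.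
-/

open Matrix Filter Topology Set

namespace Matrix

variable {n : Type*} {M : Matrix n n ℝ}

lemma PosSemidef.isSymm (hM : M.PosSemidef) : M.IsSymm := isHermitian_iff_isSymm.mp hM.isHermitian

variable [Fintype n]

lemma IsSymm.dotProduct_mulVec_comm (hM : M.IsSymm) (v w : n → ℝ) :
    v ⬝ᵥ M *ᵥ w = w ⬝ᵥ M *ᵥ v := by
  rw [dotProduct_mulVec, ← mulVec_transpose, hM.eq, dotProduct_comm]

lemma IsSymm.dotProduct_mulVec_sub_smul (hM : M.IsSymm) (v w : n → ℝ) (t : ℝ) :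
    (v - t • w) ⬝ᵥ M *ᵥ (v - t • w)
      = v ⬝ᵥ M *ᵥ v - 2 * t * (v ⬝ᵥ M *ᵥ w) + t ^ 2 * (w ⬝ᵥ M *ᵥ w) := by
  simp only [mulVec_sub, mulVec_smul, dotProduct_sub, sub_dotProduct, dotProduct_smul,
    smul_dotProduct, smul_eq_mul, hM.dotProduct_mulVec_comm w v]
  ring

lemma IsSymm.dotProduct_mulVec_add (hM : M.IsSymm) (v w : n → ℝ) :
    (v + w) ⬝ᵥ M *ᵥ (v + w) = v ⬝ᵥ M *ᵥ v + 2 * (v ⬝ᵥ M *ᵥ w) + w ⬝ᵥ M *ᵥ w := by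
  simp only [mulVec_add, dotProduct_add, add_dotProduct, hM.dotProduct_mulVec_comm w v]
  ring

namespace PosSemidef

lemma dotProduct_mulVec_self_nonneg (hM : M.PosSemidef) (v : n → ℝ) :
    0 ≤ v ⬝ᵥ M *ᵥ v := by
  simpa using hM.dotProduct_mulVec_nonneg v

lemma dotProduct_mulVec_sq_le_s10 (hM : M.PosSemidef) (v w : n → ℝ) :
    (v ⬝ᵥ M *ᵥ w) ^ 2 ≤ (v ⬝ᵥ M *ᵥ v) * (w ⬝ᵥ M *ᵥ w) := by
  classical
  simpa only [toBilin'_apply'] using M.toBilin'.apply_sq_le_of_symm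
    (fun x ↦ by simpa only [toBilin'_apply'] using hM.dotProduct_mulVec_self_nonneg x)
    (LinearMap.BilinForm.isSymm_iff.mp (isSymm_toBilin'_iff_isSymm.mpr hM.isSymm)) v w

lemma dotProduct_mulVec_sub_nonpos_of_forall_le (hM : M.PosSemidef) {X : Set (n → ℝ)}
    (hX : Convex ℝ X) {y p z : n → ℝ} (hp : p ∈ X) (hz : z ∈ X)
    (hmin : ∀ w ∈ X, (y - p) ⬝ᵥ M *ᵥ (y - p) ≤ (y - w) ⬝ᵥ M *ᵥ (y - w)) :
    (y - p) ⬝ᵥ M *ᵥ (z - p) ≤ 0 := by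
  have hsmall : ∀ t ∈ Ioc (0 : ℝ) 1,
      2 * ((y - p) ⬝ᵥ M *ᵥ (z - p)) ≤ t * ((z - p) ⬝ᵥ M *ᵥ (z - p)) := by
    rintro t ⟨ht0, ht1⟩
    have hw : p + t • (z - p) ∈ X := hX.add_smul_sub_mem hp hz ⟨ht0.le, ht1⟩
    have h := hmin _ hw
    rw [show y - (p + t • (z - p)) = (y - p) - t • (z - p) by abel,
      hM.isSymm.dotProduct_mulVec_sub_smul] at h
    nlinarith
  have hlim : Tendsto (fun t : ℝ ↦ t * ((z - p) ⬝ᵥ M *ᵥ (z - p))) (𝓝[>] 0) (𝓝 0) :=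
    ((continuous_mul_const _).tendsto' 0 0 (zero_mul _)).mono_left nhdsWithin_le_nhds
  have := ge_of_tendsto hlim (eventually_of_mem (Ioc_mem_nhdsGT zero_lt_one) hsmall)
  linarith

lemma dotProduct_mulVec_sub_le_of_forall_le (hM : M.PosSemidef) {X : Set (n → ℝ)}
    (hX : Convex ℝ X) {y p z : n → ℝ} (hp : p ∈ X) (hz : z ∈ X)
    (hmin : ∀ w ∈ X, (y - p) ⬝ᵥ M *ᵥ (y - p) ≤ (y - w) ⬝ᵥ M *ᵥ (y - w)) :
    (p - z) ⬝ᵥ M *ᵥ (p - z) ≤ (y - z) ⬝ᵥ M *ᵥ (y - z) := by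
  have hvar := hM.dotProduct_mulVec_sub_nonpos_of_forall_le hX hp hz hmin
  have hsplit := hM.isSymm.dotProduct_mulVec_add (y - p) (p - z)
  rw [show y - p + (p - z) = y - z by abel] at hsplit
  have hcross : (y - p) ⬝ᵥ M *ᵥ (p - z) = -((y - p) ⬝ᵥ M *ᵥ (z - p)) := by
    rw [← neg_sub z p, mulVec_neg, dotProduct_neg]
  have := hM.dotProduct_mulVec_self_nonneg (y - p)
  linarith

end PosSemidef

namespace PosDef

variable [DecidableEq n]

lemma mulVec_inv_mulVec_s10 (hM : M.PosDef) (v : n → ℝ) : M *ᵥ M⁻¹ *ᵥ v = v := by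
  rw [mulVec_mulVec, mul_nonsing_inv _ (isUnit_iff_ne_zero.mpr hM.det_pos.ne'), one_mulVec]

lemma inv_mulVec_mulVec_s10 (hM : M.PosDef) (v : n → ℝ) : M⁻¹ *ᵥ M *ᵥ v = v := by
  rw [mulVec_mulVec, nonsing_inv_mul _ (isUnit_iff_ne_zero.mpr hM.det_pos.ne'), one_mulVec]

lemma dotProduct_self_le_mul_inv_of_le (hM : M.PosDef) {c : ℝ}
    (hub : ∀ v, v ⬝ᵥ M *ᵥ v ≤ c * (v ⬝ᵥ v)) (v : n → ℝ) :
    v ⬝ᵥ v ≤ c * (v ⬝ᵥ M⁻¹ *ᵥ v) := by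
  rcases eq_or_ne v 0 with rfl | hv
  · simp
  set w := M⁻¹ *ᵥ v
  have hw : M *ᵥ w = v := hM.mulVec_inv_mulVec_s10 v
  have hvv : 0 < v ⬝ᵥ v := lt_of_le_of_ne (by simpa using dotProduct_self_star_nonneg v)
    (Ne.symm (dotProduct_self_eq_zero.not.mpr hv))
  have hq : 0 ≤ v ⬝ᵥ w := by simpa using hM.inv.posSemidef.dotProduct_mulVec_self_nonneg v
  have hcs := hM.posSemidef.dotProduct_mulVec_sq_le_s10 w v
  rw [hM.posSemidef.isSymm.dotProduct_mulVec_comm w v, hw, dotProduct_comm w v] at hcs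
  have : (v ⬝ᵥ v) * (v ⬝ᵥ v) ≤ (c * (v ⬝ᵥ w)) * (v ⬝ᵥ v) := by
    nlinarith [mul_le_mul_of_nonneg_left (hub v) hq]
  exact le_of_mul_le_mul_right this hvv

lemma inv_dotProduct_le_of_le (hM : M.PosDef) {c : ℝ}
    (hlb : ∀ v, v ⬝ᵥ v ≤ c * (v ⬝ᵥ M *ᵥ v)) (v : n → ℝ) :
    v ⬝ᵥ M⁻¹ *ᵥ v ≤ c * (v ⬝ᵥ v) := by
  rcases eq_or_ne v 0 with rfl | hv
  · simp
  set w := M⁻¹ *ᵥ v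
  have hw : M *ᵥ w = v := hM.mulVec_inv_mulVec_s10 v
  have hq : 0 < v ⬝ᵥ w := by simpa using hM.inv.dotProduct_mulVec_pos hv
  have hvv : 0 ≤ v ⬝ᵥ v := by simpa using dotProduct_self_star_nonneg v
  have hcs := PosSemidef.one.dotProduct_mulVec_sq_le_s10 w v
  simp only [one_mulVec, dotProduct_comm w v] at hcs
  have hlbw := hlb w
  rw [hw, dotProduct_comm w v] at hlbw
  have : (v ⬝ᵥ w) * (v ⬝ᵥ w) ≤ (c * (v ⬝ᵥ v)) * (v ⬝ᵥ w) := by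
    nlinarith [mul_le_mul_of_nonneg_right hlbw hvv]
  exact le_of_mul_le_mul_right this hq

lemma inv_dotProduct_sub_smul_mulVec (hM : M.PosDef) (e u : n → ℝ) (α : ℝ) :
    (e - α • M *ᵥ u) ⬝ᵥ M⁻¹ *ᵥ (e - α • M *ᵥ u)
      = e ⬝ᵥ M⁻¹ *ᵥ e - 2 * α * (e ⬝ᵥ u) + α ^ 2 * (u ⬝ᵥ M *ᵥ u) := by
  rw [hM.inv.posSemidef.isSymm.dotProduct_mulVec_sub_smul, hM.inv_mulVec_mulVec_s10,
    dotProduct_comm (M *ᵥ u)]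

end PosDef

end Matrix

lemma dotProduct_sub_le_of_epsSubgradient_of_le {n : Type*} [Fintype n]
    {f : (n → ℝ) → EReal} {x z u : n → ℝ} {ε : ℝ} (hx_top : f x ≠ ⊤) (hx_bot : f x ≠ ⊥)
    (hu : f x + ((u ⬝ᵥ (z - x) - ε : ℝ) : EReal) ≤ f z) (hz : f z ≤ f x) :
    u ⬝ᵥ (z - x) ≤ ε := by
  obtain ⟨a, ha⟩ : ∃ a : ℝ, f x = a := ⟨(f x).toReal, (EReal.coe_toReal hx_top hx_bot).symm⟩
  have h := hu.trans hz
  rw [ha, ← EReal.coe_add, EReal.coe_le_coe_iff] at h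
  linarith

lemma summable_sqrt_one_add_mul_one_add_sub_one {γ : ℕ → ℝ} (hγ : ∀ k, 0 ≤ γ k)
    (hs : Summable γ) : Summable fun k ↦ √((1 + γ k) * (1 + γ (k + 1))) - 1 := by
  refine ((hs.add ((summable_nat_add_iff 1).mpr hs)).div_const 2).of_nonneg_of_le
    (fun k ↦ ?_) (fun k ↦ ?_)
  · have : 1 ≤ (1 + γ k) * (1 + γ (k + 1)) := by nlinarith [hγ k, hγ (k + 1)]
    simpa using Real.one_le_sqrt.mpr this
  · have hamgm : √((1 + γ k) * (1 + γ (k + 1))) ≤ ((1 + γ k) + (1 + γ (k + 1))) / 2 :=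
      (Real.sqrt_le_left (by linarith [hγ k, hγ (k + 1)])).mpr
        (by nlinarith [sq_nonneg (γ k - γ (k + 1))])
    linarith

theorem inv_dotProduct_sub_le_of_projection {n : Type*} [Fintype n] [DecidableEq n]
    {M M' : Matrix n n ℝ} (hM : M.PosDef) (hM' : M'.PosDef) {c c' : ℝ}
    (hc : 0 ≤ c) (hc' : 0 ≤ c') (hub : ∀ v, v ⬝ᵥ M *ᵥ v ≤ c * (v ⬝ᵥ v))
    (hlb' : ∀ v, v ⬝ᵥ v ≤ c' * (v ⬝ᵥ M' *ᵥ v)) {X : Set (n → ℝ)} (hX : Convex ℝ X)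
    {x u p z : n → ℝ} {α ε : ℝ} (hα : 0 ≤ α) (hp : p ∈ X) (hz : z ∈ X)
    (hproj : ∀ w ∈ X, (x - α • M *ᵥ u - p) ⬝ᵥ M⁻¹ *ᵥ (x - α • M *ᵥ u - p)
      ≤ (x - α • M *ᵥ u - w) ⬝ᵥ M⁻¹ *ᵥ (x - α • M *ᵥ u - w))
    (hu : u ⬝ᵥ (z - x) ≤ ε) :
    (p - z) ⬝ᵥ M'⁻¹ *ᵥ (p - z)
      ≤ c' * c * ((x - z) ⬝ᵥ M⁻¹ *ᵥ (x - z) + 2 * α * ε + α ^ 2 * (u ⬝ᵥ M *ᵥ u)) := by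
  have hcross : -(2 * α * ((x - z) ⬝ᵥ u)) ≤ 2 * α * ε := by
    have : (x - z) ⬝ᵥ u = -(u ⬝ᵥ (z - x)) := by
      rw [dotProduct_comm, ← dotProduct_neg, neg_sub]
    rw [this]
    nlinarith
  calc (p - z) ⬝ᵥ M'⁻¹ *ᵥ (p - z)
      ≤ c' * ((p - z) ⬝ᵥ (p - z)) := hM'.inv_dotProduct_le_of_le hlb' _
    _ ≤ c' * (c * ((p - z) ⬝ᵥ M⁻¹ *ᵥ (p - z))) := by
      gcongr; exact hM.dotProduct_self_le_mul_inv_of_le hub _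
    _ ≤ c' * (c * ((x - α • M *ᵥ u - z) ⬝ᵥ M⁻¹ *ᵥ (x - α • M *ᵥ u - z))) := by
      gcongr
      exact hM.inv.posSemidef.dotProduct_mulVec_sub_le_of_forall_le hX hp hz hproj
    _ = c' * c * ((x - z) ⬝ᵥ M⁻¹ *ᵥ (x - z) - 2 * α * ((x - z) ⬝ᵥ u)
          + α ^ 2 * (u ⬝ᵥ M *ᵥ u)) := by
      rw [sub_right_comm, hM.inv_dotProduct_sub_smul_mulVec]; ring
    _ ≤ _ := by gcongr; linarith

theorem stmt10_general {n : ℕ} (f : (Fin n → ℝ) → EReal)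
    (hproper_bot : ∀ z, f z ≠ ⊥)
    (X : Set (Fin n → ℝ)) (hXconv : Convex ℝ X)
    (hXdom : ∀ z ∈ X, f z ≠ ⊤)
    (x u : ℕ → Fin n → ℝ) (ε α L γ : ℕ → ℝ) (ρ : ℝ) (Lbd : ℝ)
    (D : ℕ → Matrix (Fin n) (Fin n) ℝ) (hD : ∀ k, (D k).PosDef)
    (hε : ∀ k, 0 ≤ ε k) (hα : ∀ k, 0 < α k)
    (hx0 : x 0 ∈ X)
    -- `u k` is an `ε k`-subgradient of `f` at `x k`
    (hu : ∀ k, ∀ z : Fin n → ℝ,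
      f (x k) + (((u k ⬝ᵥ (z - x k) - ε k : ℝ)) : EReal) ≤ f z)
    -- boundedness of the subgradients: `‖u k‖ ≤ ρ`
    (hρ : ∀ k, Real.sqrt (u k ⬝ᵥ u k) ≤ ρ)
    -- spectral bounds `‖D k‖ ≤ L k` and `‖(D k)⁻¹‖ ≤ L k`
    (hDub : ∀ k, ∀ v : Fin n → ℝ, v ⬝ᵥ (D k).mulVec v ≤ L k * (v ⬝ᵥ v))
    (hDlb : ∀ k, ∀ v : Fin n → ℝ, v ⬝ᵥ v ≤ L k * (v ⬝ᵥ (D k).mulVec v))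
    -- `L k = √(1+γ k) ≤ Lbd`, `∑ γ k < ∞`
    (hLγ : ∀ k, L k = Real.sqrt (1 + γ k)) (hγ : ∀ k, 0 ≤ γ k)
    (hLbd : ∀ k, L k ≤ Lbd) (hγsum : Summable γ)
    -- `x (k+1)` is the scaled projection of `x k - α k • D k u k` onto `X`
    (hproj : ∀ k, x (k + 1) ∈ X ∧ ∀ w ∈ X,
      ((x k - α k • (D k).mulVec (u k)) - x (k + 1)) ⬝ᵥ
          (D k)⁻¹.mulVec ((x k - α k • (D k).mulVec (u k)) - x (k + 1))
        ≤ ((x k - α k • (D k).mulVec (u k)) - w) ⬝ᵥ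
            (D k)⁻¹.mulVec ((x k - α k • (D k).mulVec (u k)) - w))
    -- `x̃` is a solution of `min_{x ∈ X} f`
    (xt : Fin n → ℝ) (hxt : xt ∈ X) (hxtmin : ∀ z ∈ X, f xt ≤ f z)
    (ζ : ℕ → ℝ) (hζ : ∀ k, ζ k = Real.sqrt ((1 + γ k) * (1 + γ (k + 1)))) :
    (∃ η : ℕ → ℝ, Summable η ∧ ∀ k, ζ k = 1 + η k) ∧
    ∀ k, (x (k + 1) - xt) ⬝ᵥ (D (k + 1))⁻¹.mulVec (x (k + 1) - xt)
      ≤ ζ k * ((x k - xt) ⬝ᵥ (D k)⁻¹.mulVec (x k - xt))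
        + (5 * Lbd * ρ ^ 2) * ζ k * (α k) ^ 2 + 2 * Lbd * ζ k * α k * ε k := by
  have hxX : ∀ k, x k ∈ X
    | 0 => hx0
    | k + 1 => (hproj k).1
  have hL : ∀ k, 1 ≤ L k := fun k ↦ by
    rw [hLγ k, Real.one_le_sqrt]; linarith [hγ k]
  have hζL : ∀ k, ζ k = L k * L (k + 1) := fun k ↦ by
    rw [hζ k, hLγ k, hLγ (k + 1), Real.sqrt_mul (by linarith [hγ k])]
  refine ⟨⟨fun k ↦ ζ k - 1, by simpa only [hζ] using
    summable_sqrt_one_add_mul_one_add_sub_one hγ hγsum, fun k ↦ by ring⟩, fun k ↦ ?_⟩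
  have hsub : u k ⬝ᵥ (xt - x k) ≤ ε k :=
    dotProduct_sub_le_of_epsSubgradient_of_le (hXdom _ (hxX k)) (hproper_bot _) (hu k xt)
      (hxtmin _ (hxX k))
  have hstep := inv_dotProduct_sub_le_of_projection (hD k) (hD (k + 1))
    (zero_le_one.trans (hL k)) (zero_le_one.trans (hL (k + 1))) (hDub k) (hDlb (k + 1))
    hXconv (hα k).le (hxX (k + 1)) hxt (hproj k).2 hsub
  have hLbd1 : 1 ≤ Lbd := (hL k).trans (hLbd k)
  have huDu : u k ⬝ᵥ D k *ᵥ u k ≤ Lbd * ρ ^ 2 := calc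
    u k ⬝ᵥ D k *ᵥ u k ≤ L k * (u k ⬝ᵥ u k) := hDub k (u k)
    _ ≤ Lbd * ρ ^ 2 := mul_le_mul (hLbd k) (Real.sqrt_le_iff.mp (hρ k)).2
      (by simpa using dotProduct_self_star_nonneg (u k)) (zero_le_one.trans hLbd1)
  rw [mul_comm (L (k + 1)), ← hζL] at hstep
  have hζ0 : 0 ≤ ζ k := by rw [hζL]; nlinarith [hL k, hL (k + 1)]
  have hζα : 0 ≤ ζ k * α k := mul_nonneg hζ0 (hα k).le
  nlinarith [mul_nonneg (mul_nonneg hζα (hε k)) (sub_nonneg.mpr hLbd1),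
    mul_le_mul_of_nonneg_left huDu (mul_nonneg hζα (hα k).le),
    mul_nonneg (mul_nonneg hζα (hα k).le) (mul_nonneg (zero_le_one.trans hLbd1) (sq_nonneg ρ))]

/-- Quasi-Fejér monotonicity of the scaled ε-subgradient iterates relative to
the variable metrics `D_k⁻¹`:
`‖x^{k+1} - x̃‖²_{D_{k+1}⁻¹} ≤ ζ_k ‖x^k - x̃‖²_{D_k⁻¹} + ξ ζ_k α_k² + 2 L ζ_k α_k ε_k`
with `ζ_k = √((1+γ_k)(1+γ_{k+1})) = 1 + η_k` and `∑ η_k < ∞`, `ξ = 5 L ρ²`. -/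
theorem stmt10 {n : ℕ} (f : (Fin n → ℝ) → EReal)
    (hproper_bot : ∀ z, f z ≠ ⊥)
    (hconv : ∀ a b : Fin n → ℝ, ∀ t : ℝ, 0 ≤ t → t ≤ 1 →
      f (t • a + (1 - t) • b) ≤ ((t : ℝ) : EReal) * f a + (((1 - t : ℝ)) : EReal) * f b)
    (hlsc : LowerSemicontinuous f)
    (X : Set (Fin n → ℝ)) (hXne : X.Nonempty) (hXcl : IsClosed X) (hXconv : Convex ℝ X)
    (hXdom : ∀ z ∈ X, f z ≠ ⊤)
    (x u : ℕ → Fin n → ℝ) (ε α L γ : ℕ → ℝ) (ρ : ℝ) (Lbd : ℝ)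
    (D : ℕ → Matrix (Fin n) (Fin n) ℝ) (hD : ∀ k, (D k).PosDef)
    (hε : ∀ k, 0 ≤ ε k) (hα : ∀ k, 0 < α k)
    (hx0 : x 0 ∈ X)
    -- `u k` is an `ε k`-subgradient of `f` at `x k`
    (hu : ∀ k, ∀ z : Fin n → ℝ,
      f (x k) + (((u k ⬝ᵥ (z - x k) - ε k : ℝ)) : EReal) ≤ f z)
    -- boundedness of the subgradients: `‖u k‖ ≤ ρ`
    (hρ : ∀ k, Real.sqrt (u k ⬝ᵥ u k) ≤ ρ)
    -- spectral bounds `‖D k‖ ≤ L k` and `‖(D k)⁻¹‖ ≤ L k`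
    (hDub : ∀ k, ∀ v : Fin n → ℝ, v ⬝ᵥ (D k).mulVec v ≤ L k * (v ⬝ᵥ v))
    (hDlb : ∀ k, ∀ v : Fin n → ℝ, v ⬝ᵥ v ≤ L k * (v ⬝ᵥ (D k).mulVec v))
    -- `L k = √(1+γ k) ≤ Lbd`, `∑ γ k < ∞`
    (hLγ : ∀ k, L k = Real.sqrt (1 + γ k)) (hγ : ∀ k, 0 ≤ γ k)
    (hLbd : ∀ k, L k ≤ Lbd) (hγsum : Summable γ)
    -- `x (k+1)` is the scaled projection of `x k - α k • D k u k` onto `X`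
    (hproj : ∀ k, x (k + 1) ∈ X ∧ ∀ w ∈ X,
      ((x k - α k • (D k).mulVec (u k)) - x (k + 1)) ⬝ᵥ
          (D k)⁻¹.mulVec ((x k - α k • (D k).mulVec (u k)) - x (k + 1))
        ≤ ((x k - α k • (D k).mulVec (u k)) - w) ⬝ᵥ
            (D k)⁻¹.mulVec ((x k - α k • (D k).mulVec (u k)) - w))
    -- `x̃` is a solution of `min_{x ∈ X} f`
    (xt : Fin n → ℝ) (hxt : xt ∈ X) (hxtmin : ∀ z ∈ X, f xt ≤ f z)
    (ζ : ℕ → ℝ) (hζ : ∀ k, ζ k = Real.sqrt ((1 + γ k) * (1 + γ (k + 1)))) :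
    (∃ η : ℕ → ℝ, Summable η ∧ ∀ k, ζ k = 1 + η k) ∧
    ∀ k, (x (k + 1) - xt) ⬝ᵥ (D (k + 1))⁻¹.mulVec (x (k + 1) - xt)
      ≤ ζ k * ((x k - xt) ⬝ᵥ (D k)⁻¹.mulVec (x k - xt))
        + (5 * Lbd * ρ ^ 2) * ζ k * (α k) ^ 2 + 2 * Lbd * ζ k * α k * ε k :=
  stmt10_general f hproper_bot X hXconv hXdom x u ε α L γ ρ Lbd D hD hε hα hx0 hu hρ hDub hDlb hLγ
    hγ hLbd hγsum hproj xt hxt hxtmin ζ hζ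
end

section
/- In the setting of the previous resolvent lemma, if additionally diam(dom(f1*)) ≤ D for some D > 0, then the ε-subgradient error satisfies σ = f1(Ax) + f1*(ŷ) − ŷ^T A x ≤ D^2/(2τ), where ŷ = (I + τ ∂f1*)^{-1}(y + τ A x) with y ∈ dom(f1*). -/
/-!
Write `w = y + τ A x`. Minimality of `ŷ` tested against any `p ∈ dom f₁*` gives
`f₁*(ŷ) - f₁*(p) ≤ (‖p - w‖² - ‖ŷ - w‖²) / (2τ)`, and expanding the squares around `y` turns the
right-hand side into `(‖p - y‖² - ‖ŷ - y‖²) / (2τ) - ⟨A x, p - ŷ⟩ ≤ D² / (2τ) - ⟨A x, p - ŷ⟩`.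
Hence `⟨A x, p⟩ - f₁*(p) + f₁*(ŷ) - ⟨ŷ, A x⟩ ≤ D² / (2τ)` for every such `p`, and taking the
supremum over `p` gives the claim because `f₁ = f₁**` (Fenchel–Moreau). The only part of
Fenchel–Moreau needed, `f₁ ≤ f₁**` at a point of `dom f₁`, comes from separating a point strictly
below the graph from the closed convex epigraph by a non-vertical hyperplane.
-/

open Matrix

section Epigraph

variable {E : Type*} {f : E → EReal}

def realEpigraph (f : E → EReal) : Set (E × ℝ) := {q | f q.1 ≤ q.2}

@[simp]
theorem mem_realEpigraph {q : E × ℝ} : q ∈ realEpigraph f ↔ f q.1 ≤ q.2 := Iff.rfl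

theorem convex_realEpigraph [AddCommGroup E] [Module ℝ E]
    (hf : ∀ a b : E, ∀ t : ℝ, 0 ≤ t → t ≤ 1 →
      f (t • a + (1 - t) • b) ≤ ((t : ℝ) : EReal) * f a + (((1 - t : ℝ)) : EReal) * f b) :
    Convex ℝ (realEpigraph f) := by
  rintro ⟨a, r⟩ ha ⟨b, s⟩ hb t u ht hu htu
  obtain rfl : u = 1 - t := by linarith
  simp only [mem_realEpigraph, Prod.smul_mk, Prod.mk_add_mk, smul_eq_mul] at ha hb ⊢
  calc f (t • a + (1 - t) • b)
      ≤ ((t : ℝ) : EReal) * f a + (((1 - t : ℝ)) : EReal) * f b := hf a b t ht (by linarith)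
    _ ≤ ((t : ℝ) : EReal) * r + (((1 - t : ℝ)) : EReal) * s := by gcongr
    _ = ((t * r + (1 - t) * s : ℝ) : EReal) := by push_cast; rfl

theorem LowerSemicontinuous.isClosed_realEpigraph [TopologicalSpace E]
    (hf : LowerSemicontinuous f) : IsClosed (realEpigraph f) :=
  hf.isClosed_epigraph.preimage
    (continuous_fst.prodMk (continuous_coe_real_ereal.comp continuous_snd))

variable [AddCommGroup E] [Module ℝ E] [TopologicalSpace E] [IsTopologicalAddGroup E]
  [ContinuousSMul ℝ E] [LocallyConvexSpace ℝ E]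

theorem exists_affine_le_of_lt_of_ne_top (hconv : Convex ℝ (realEpigraph f))
    (hclosed : IsClosed (realEpigraph f)) {x₀ : E} (hx₀ : f x₀ ≠ ⊤) {a : ℝ} (ha : a < f x₀) :
    ∃ (ℓ : StrongDual ℝ E) (B : ℝ), (∀ w, ((ℓ w - B : ℝ) : EReal) ≤ f w) ∧ a < ℓ x₀ - B := by
  obtain ⟨φ, u, hφS, hφx₀⟩ := geometric_hahn_banach_closed_point hconv hclosed
    (x := (x₀, a)) (not_le.mpr ha)
  set t := φ (0, 1)
  have hφ : ∀ w r, φ (w, r) = φ (w, 0) + r * t := fun w r => by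
    rw [← smul_eq_mul, ← map_smul, ← map_add, Prod.smul_mk, smul_zero, smul_eq_mul, mul_one,
      Prod.mk_add_mk, add_zero, zero_add]
  -- `(x₀, f x₀)` lies in the epigraph right above `(x₀, a)`, so the hyperplane is not vertical.
  have ht : t < 0 := by
    have hx₀S := hφS (x₀, (f x₀).toReal) (by simp [EReal.le_coe_toReal hx₀])
    rw [hφ] at hx₀S hφx₀
    have : a < (f x₀).toReal := by
      rwa [← EReal.coe_lt_coe_iff, EReal.coe_toReal hx₀ (ha.trans' (EReal.bot_lt_coe a)).ne']
    nlinarith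
  have hrescale : ∀ w r, -t⁻¹ * φ (w, 0) - -t⁻¹ * u = -t⁻¹ * (φ (w, r) - u) + r := fun w r => by
    rw [hφ w r]; field_simp [ht.ne]; ring
  have hs : 0 < -t⁻¹ := neg_pos.mpr (inv_lt_zero.mpr ht)
  refine ⟨-t⁻¹ • φ.comp (.inl ℝ E ℝ), -t⁻¹ * u, fun w => ?_, ?_⟩
  · refine EReal.le_of_forall_lt_iff_le.mp fun r hr => ?_
    have hwr : φ (w, r) < u := hφS (w, r) hr.le
    have : -t⁻¹ * (φ (w, r) - u) < 0 := mul_neg_of_pos_of_neg hs (sub_neg.mpr hwr)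
    simp only [_root_.smul_apply, ContinuousLinearMap.comp_apply,
      ContinuousLinearMap.inl_apply, smul_eq_mul, EReal.coe_le_coe_iff, hrescale w r]
    linarith
  · have : 0 < -t⁻¹ * (φ (x₀, a) - u) := mul_pos hs (sub_pos.mpr hφx₀)
    simp only [_root_.smul_apply, ContinuousLinearMap.comp_apply,
      ContinuousLinearMap.inl_apply, smul_eq_mul, hrescale x₀ a]
    linarith

end Epigraph

theorem LinearMap.apply_eq_dotProduct {ι R : Type*} [Fintype ι] [DecidableEq ι] [CommSemiring R]
    (ℓ : (ι → R) →ₗ[R] R) (w : ι → R) : ℓ w = w ⬝ᵥ fun i => ℓ (Pi.single i 1) := by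
  rw [ℓ.pi_apply_eq_sum_univ w]
  refine Finset.sum_congr rfl fun i _ => ?_
  rw [smul_eq_mul]
  congr
  ext j
  simp [Pi.single_apply, eq_comm]

section FenchelConjugate

variable {ι : Type*} [Fintype ι] {f : (ι → ℝ) → EReal}

noncomputable def fenchelConj (f : (ι → ℝ) → EReal) (p : ι → ℝ) : EReal :=
  ⨆ z, ((z ⬝ᵥ p : ℝ) : EReal) - f z

theorem sub_le_fenchelConj (f : (ι → ℝ) → EReal) (z p : ι → ℝ) :
    ((z ⬝ᵥ p : ℝ) : EReal) - f z ≤ fenchelConj f p :=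
  le_iSup (fun z => ((z ⬝ᵥ p : ℝ) : EReal) - f z) z

theorem fenchelConj_ne_bot {z : ι → ℝ} (hz : f z ≠ ⊤) (p : ι → ℝ) : fenchelConj f p ≠ ⊥ :=
  ne_bot_of_le_ne_bot (by simp [sub_eq_add_neg, hz]) (sub_le_fenchelConj f z p)

theorem exists_fenchelConj_le_of_lt (hlsc : LowerSemicontinuous f)
    (hconv : Convex ℝ (realEpigraph f)) {x₀ : ι → ℝ} (hx₀ : f x₀ ≠ ⊤) {a : ℝ} (ha : a < f x₀) :
    ∃ p, fenchelConj f p ≤ ((x₀ ⬝ᵥ p - a : ℝ) : EReal) := by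
  classical
  obtain ⟨ℓ, B, hℓf, hℓx₀⟩ :=
    exists_affine_le_of_lt_of_ne_top hconv hlsc.isClosed_realEpigraph hx₀ ha
  have hℓ : ∀ w, ℓ w = w ⬝ᵥ fun i => ℓ (Pi.single i 1) :=
    (ℓ : (ι → ℝ) →ₗ[ℝ] ℝ).apply_eq_dotProduct
  refine ⟨fun i => ℓ (Pi.single i 1), iSup_le fun w => ?_⟩
  calc ((w ⬝ᵥ _ : ℝ) : EReal) - f w ≤ ((w ⬝ᵥ _ : ℝ) : EReal) - ((ℓ w - B : ℝ) : EReal) :=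
        EReal.sub_le_sub le_rfl (hℓf w)
    _ ≤ _ := by
        rw [← EReal.coe_sub, EReal.coe_le_coe_iff, ← hℓ, ← hℓ]
        linarith

end FenchelConjugate

theorem dotProduct_self_sub_add_smul_sub {ι R : Type*} [Fintype ι] [CommRing R]
    (u v y a : ι → R) (τ : R) :
    (u - (y + τ • a)) ⬝ᵥ (u - (y + τ • a)) - (v - (y + τ • a)) ⬝ᵥ (v - (y + τ • a))
      = (u - y) ⬝ᵥ (u - y) - (v - y) ⬝ᵥ (v - y) - 2 * τ * (a ⬝ᵥ u - a ⬝ᵥ v) := by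
  simp only [dotProduct, Pi.sub_apply, Pi.add_apply, Pi.smul_apply, smul_eq_mul,
    ← Finset.sum_sub_distrib, Finset.mul_sum]
  exact Finset.sum_congr rfl fun i _ => by ring

theorem prox_gap_le {ι : Type*} [Fintype ι] {τ : ℝ} (hτ : 0 < τ) {D a g gp : ℝ}
    {x₀ y p yhat : ι → ℝ}
    (hprox : g + 1 / (2 * τ) * ((yhat - (y + τ • x₀)) ⬝ᵥ (yhat - (y + τ • x₀)))
      ≤ gp + 1 / (2 * τ) * ((p - (y + τ • x₀)) ⬝ᵥ (p - (y + τ • x₀))))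
    (hp : gp ≤ x₀ ⬝ᵥ p - a) (hdist : (p - y) ⬝ᵥ (p - y) ≤ D ^ 2) :
    a + g - yhat ⬝ᵥ x₀ ≤ D ^ 2 / (2 * τ) := by
  have hgap : 1 / (2 * τ) * ((p - (y + τ • x₀)) ⬝ᵥ (p - (y + τ • x₀)))
      - 1 / (2 * τ) * ((yhat - (y + τ • x₀)) ⬝ᵥ (yhat - (y + τ • x₀)))
      = 1 / (2 * τ) * ((p - y) ⬝ᵥ (p - y) - (yhat - y) ⬝ᵥ (yhat - y))
        - (x₀ ⬝ᵥ p - x₀ ⬝ᵥ yhat) := by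
    rw [← mul_sub, dotProduct_self_sub_add_smul_sub]
    field_simp
  have hyhat : 0 ≤ (yhat - y) ⬝ᵥ (yhat - y) := by
    simpa using dotProduct_star_self_nonneg (yhat - y)
  have hD : 1 / (2 * τ) * ((p - y) ⬝ᵥ (p - y) - (yhat - y) ⬝ᵥ (yhat - y)) ≤ D ^ 2 / (2 * τ) := by
    rw [one_div_mul_eq_div]
    gcongr
    linarith
  rw [dotProduct_comm yhat x₀]
  linarith

theorem EReal.add_coe_sub_coe_le_of_forall_lt {e : EReal} {c d r : ℝ}
    (h : ∀ a : ℝ, a < e → a + c - d ≤ r) : e + c - d ≤ r := by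
  have he : e ≤ ((r - c + d : ℝ) : EReal) :=
    EReal.ge_of_forall_gt_iff_ge.mp fun a ha => by exact_mod_cast (by linarith [h a ha])
  calc e + c - d ≤ ((r - c + d : ℝ) : EReal) + c - d :=
        EReal.sub_le_sub (add_le_add_left he _) le_rfl
    _ = r := by norm_cast; ring_nf

theorem stmt13_general {m n : ℕ} (f1 : (Fin m → ℝ) → EReal)
    (hlsc : LowerSemicontinuous f1)
    (hconv : ∀ a b : Fin m → ℝ, ∀ t : ℝ, 0 ≤ t → t ≤ 1 →
      f1 (t • a + (1 - t) • b) ≤ ((t : ℝ) : EReal) * f1 a + (((1 - t : ℝ)) : EReal) * f1 b)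
    (A : Matrix (Fin m) (Fin n) ℝ) (x : Fin n → ℝ) (y : Fin m → ℝ)
    (τ : ℝ) (hτ : 0 < τ)
    (hx : f1 (A.mulVec x) ≠ ⊤)
    -- the Fenchel conjugate of `f1`
    (f1star : (Fin m → ℝ) → EReal)
    (hf1star : ∀ p, f1star p = ⨆ z : Fin m → ℝ, (((z ⬝ᵥ p : ℝ)) : EReal) - f1 z)
    -- the domain of `f1*` has (Euclidean) diameter at most `Dd > 0`
    (Dd : ℝ)
    (hdiam : ∀ y₁ y₂ : Fin m → ℝ, f1star y₁ ≠ ⊤ → f1star y₂ ≠ ⊤ →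
      Real.sqrt ((y₁ - y₂) ⬝ᵥ (y₁ - y₂)) ≤ Dd)
    -- `y ∈ dom f1*`
    (hy : f1star y ≠ ⊤)
    -- `yhat` minimizes `z ↦ f1*(z) + ‖z - (y + τ A x)‖² / (2τ)`
    (yhat : Fin m → ℝ)
    (hyhat : ∀ z : Fin m → ℝ,
      f1star yhat + (((1 / (2 * τ)) *
          ((yhat - (y + τ • A.mulVec x)) ⬝ᵥ (yhat - (y + τ • A.mulVec x))) : ℝ) : EReal)
        ≤ f1star z + (((1 / (2 * τ)) *
            ((z - (y + τ • A.mulVec x)) ⬝ᵥ (z - (y + τ • A.mulVec x))) : ℝ) : EReal)) :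
    f1 (A.mulVec x) + f1star yhat - (((yhat ⬝ᵥ A.mulVec x : ℝ)) : EReal)
      ≤ ((Dd ^ 2 / (2 * τ) : ℝ) : EReal) := by
  obtain rfl : f1star = fenchelConj f1 := funext hf1star
  have hbot := fenchelConj_ne_bot hx
  have hyhat_top : fenchelConj f1 yhat ≠ ⊤ := fun h => by
    have := (hyhat y).trans_lt (EReal.add_lt_top hy (EReal.coe_ne_top _))
    rw [h, EReal.top_add_coe] at this
    exact lt_irrefl _ this
  obtain ⟨g, hg⟩ : ∃ g : ℝ, fenchelConj f1 yhat = g :=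
    ⟨_, (EReal.coe_toReal hyhat_top (hbot yhat)).symm⟩
  rw [hg]
  refine EReal.add_coe_sub_coe_le_of_forall_lt fun a ha => ?_
  obtain ⟨p, hp⟩ := exists_fenchelConj_le_of_lt hlsc (convex_realEpigraph hconv) hx ha
  have hp_top : fenchelConj f1 p ≠ ⊤ := ne_top_of_le_ne_top (EReal.coe_ne_top _) hp
  obtain ⟨gp, hgp⟩ : ∃ g : ℝ, fenchelConj f1 p = g :=
    ⟨_, (EReal.coe_toReal hp_top (hbot p)).symm⟩
  have hprox := hyhat p
  rw [hg, hgp] at hprox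
  rw [hgp] at hp
  norm_cast at hprox hp
  exact prox_gap_le hτ hprox hp (Real.sqrt_le_iff.mp (hdiam p y hp_top hy)).2

/-- If additionally `diam(dom f₁*) ≤ D`, then the ε-subgradient error of the
resolvent step satisfies `σ = f₁(Ax) + f₁*(ŷ) - ŷᵀ A x ≤ D² / (2τ)`. -/
theorem stmt13 {m n : ℕ} (f1 : (Fin m → ℝ) → EReal)
    (hproper_bot : ∀ z, f1 z ≠ ⊥) (hproper_dom : ∃ z, f1 z ≠ ⊤)
    (hlsc : LowerSemicontinuous f1)
    (hconv : ∀ a b : Fin m → ℝ, ∀ t : ℝ, 0 ≤ t → t ≤ 1 →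
      f1 (t • a + (1 - t) • b) ≤ ((t : ℝ) : EReal) * f1 a + (((1 - t : ℝ)) : EReal) * f1 b)
    (A : Matrix (Fin m) (Fin n) ℝ) (x : Fin n → ℝ) (y : Fin m → ℝ)
    (τ : ℝ) (hτ : 0 < τ)
    (hx : f1 (A.mulVec x) ≠ ⊤)
    -- the Fenchel conjugate of `f1`
    (f1star : (Fin m → ℝ) → EReal)
    (hf1star : ∀ p, f1star p = ⨆ z : Fin m → ℝ, (((z ⬝ᵥ p : ℝ)) : EReal) - f1 z)
    -- the domain of `f1*` has (Euclidean) diameter at most `Dd > 0`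
    (Dd : ℝ) (hDd : 0 < Dd)
    (hdiam : ∀ y₁ y₂ : Fin m → ℝ, f1star y₁ ≠ ⊤ → f1star y₂ ≠ ⊤ →
      Real.sqrt ((y₁ - y₂) ⬝ᵥ (y₁ - y₂)) ≤ Dd)
    -- `y ∈ dom f1*`
    (hy : f1star y ≠ ⊤)
    -- `yhat` minimizes `z ↦ f1*(z) + ‖z - (y + τ A x)‖² / (2τ)`
    (yhat : Fin m → ℝ)
    (hyhat : ∀ z : Fin m → ℝ,
      f1star yhat + (((1 / (2 * τ)) *
          ((yhat - (y + τ • A.mulVec x)) ⬝ᵥ (yhat - (y + τ • A.mulVec x))) : ℝ) : EReal)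
        ≤ f1star z + (((1 / (2 * τ)) *
            ((z - (y + τ • A.mulVec x)) ⬝ᵥ (z - (y + τ • A.mulVec x))) : ℝ) : EReal)) :
    f1 (A.mulVec x) + f1star yhat - (((yhat ⬝ᵥ A.mulVec x : ℝ)) : EReal)
      ≤ ((Dd ^ 2 / (2 * τ) : ℝ) : EReal) :=
  stmt13_general f1 hlsc hconv A x y τ hτ hx f1star hf1star Dd hdiam hy yhat hyhat
end
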